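/- arXiv:1212.1634 — 2 statements merged into one kernel-verified Lean document; each statement's English description precedes it below -/
import Mathlib

section
/- For every C > 1 and every χ < 0 there exists α > 0 with the following property. Let n ≥ 1 and let A_0, …, A_{n−1} ∈ GL(2,ℝ) satisfy ‖A_i‖ < C and ‖A_i⁻¹‖ < C for every i. Suppose the product M := A_{n−1}···A_0 is diagonalizable over ℝ with eigenvalues μ₁, μ₂ satisfying (1/n)·log|μ₂| < χ and (1/n)·log|μ₁| > χ/2. Then there exist an index i ∈ {0, …, n−1} and a matrix P ∈ SL(2,ℝ) with ‖P‖ < α such that P⁻¹·M_i·P is a diagonal matrix, where M_i := (A_{i−1}···A_0)·M·(A_{i−1}···A_0)⁻¹ is the return map of the cocycle based at index i (with M_0 := M). -/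
noncomputable section

abbrev M2 := Matrix (Fin 2) (Fin 2) ℝ
abbrev E2 := EuclideanSpace ℝ (Fin 2)

/-- The continuous linear map on Euclidean `ℝ²` induced by a `2 × 2` matrix. -/
def mCLM (A : M2) : E2 →L[ℝ] E2 := Matrix.toEuclideanCLM (𝕜 := ℝ) A

/-- Operator norm (w.r.t. the Euclidean norm) of a `2 × 2` matrix. -/
def mnorm (A : M2) : ℝ := ‖mCLM A‖

/-- Action of a `2 × 2` matrix on a vector of Euclidean `ℝ²`. -/
def mact (A : M2) (x : E2) : E2 := mCLM A x

end

/-- The rotation matrix of angle `t`. -/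
noncomputable def rotM (t : ℝ) : M2 := !![Real.cos t, -Real.sin t; Real.sin t, Real.cos t]

/-- The diagonal matrix `diag (a, b)`. -/
def diagM (a b : ℝ) : M2 := !![a, 0; 0, b]

/-- The product `A (j-1) * ⋯ * A 0`. -/
def prodRange (A : ℕ → M2) (j : ℕ) : M2 := (((List.range j).map A).reverse).prod


/-!
Push two eigenvectors `v, w` of `M` along the cocycle: `xᵢ = (A_{i-1} ⋯ A_0) v` and
`yᵢ = (A_{i-1} ⋯ A_0) w` are eigenvectors of the return map `Mᵢ`. If for some `i` the sine of
the angle between `xᵢ` and `yᵢ` is at least `ε`, the matrix with columns `xᵢ, yᵢ`, rescaled to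
determinant one, diagonalizes `Mᵢ` and has norm at most `1/ε + 1`. Otherwise the angles stay
small all along the orbit, and a matrix with `‖A‖, ‖A⁻¹‖ ≤ C` can increase
`log ‖x‖ - log ‖y‖` by at most `2 C² sin ∠(x, y)`; after `n` steps this bounds
`log |μ₁| - log |μ₂|` by `2 C² ε n`, which for `ε = -χ / (8 C²)` contradicts the gap
`log |μ₁| - log |μ₂| > -χ n / 2` between the exponents.
-/

lemma mact_apply (A : M2) (x : E2) (k : Fin 2) :
    mact A x k = A k 0 * x 0 + A k 1 * x 1 := by
  change (Matrix.toEuclideanCLM (𝕜 := ℝ) A x) k = _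
  simp [Matrix.ofLp_toEuclideanCLM, Matrix.mulVec, dotProduct, Fin.sum_univ_two]

lemma mact_mul (A B : M2) (x : E2) : mact (A * B) x = mact A (mact B x) := by
  simp [mact, mCLM, map_mul]

lemma mact_one (x : E2) : mact 1 x = x := by
  simp [mact, mCLM, map_one]

lemma mact_smul (A : M2) (c : ℝ) (x : E2) : mact A (c • x) = c • mact A x := by
  simp [mact]

lemma mact_sub (A : M2) (x y : E2) : mact A (x - y) = mact A x - mact A y := by
  simp [mact]

lemma norm_mact_le (A : M2) (x : E2) : ‖mact A x‖ ≤ mnorm A * ‖x‖ :=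
  (mCLM A).le_opNorm x

lemma mnorm_nonneg (A : M2) : 0 ≤ mnorm A := norm_nonneg _

lemma norm_sq_eq (x : E2) : ‖x‖ ^ 2 = x 0 ^ 2 + x 1 ^ 2 := by
  simp [EuclideanSpace.real_norm_sq_eq, Fin.sum_univ_two]

lemma diagM_det (a b : ℝ) : (diagM a b).det = a * b := by
  simp [diagM, Matrix.det_fin_two_of]

def colMat (p q : E2) : M2 := !![p 0, q 0; p 1, q 1]

lemma colMat_inj {p q p' q' : E2} : colMat p q = colMat p' q' ↔ p = p' ∧ q = q' := by
  refine ⟨fun h => ?_, fun ⟨hp, hq⟩ => hp ▸ hq ▸ rfl⟩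
  have h' := fun i j => congrFun (congrFun h i) j
  constructor <;> ext k <;> fin_cases k
  exacts [h' 0 0, h' 1 0, h' 0 1, h' 1 1]

lemma exists_colMat_eq (S : M2) : ∃ p q : E2, colMat p q = S :=
  ⟨WithLp.toLp 2 ![S 0 0, S 1 0], WithLp.toLp 2 ![S 0 1, S 1 1], by
    ext i j; fin_cases i <;> fin_cases j <;> rfl⟩

lemma mul_colMat (A : M2) (p q : E2) : A * colMat p q = colMat (mact A p) (mact A q) := by
  ext i j; fin_cases i <;> fin_cases j <;>
    simp [colMat, mact_apply, Matrix.mul_apply, Fin.sum_univ_two]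

lemma colMat_mul_diagM (p q : E2) (a b : ℝ) : colMat p q * diagM a b = colMat (a • p) (b • q) := by
  ext i j; fin_cases i <;> fin_cases j <;>
    simp [colMat, diagM, Matrix.mul_apply, Fin.sum_univ_two, mul_comm]

lemma det_colMat_smul (p q : E2) (a b : ℝ) :
    (colMat (a • p) (b • q)).det = a * b * (colMat p q).det := by
  rw [← colMat_mul_diagM, Matrix.det_mul, diagM_det]; ring

lemma det_colMat_mact (A : M2) (p q : E2) :
    (colMat (mact A p) (mact A q)).det = A.det * (colMat p q).det := by
  rw [← mul_colMat, Matrix.det_mul]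

lemma ne_zero_of_det_colMat_ne_zero {p q : E2} (h : (colMat p q).det ≠ 0) : p ≠ 0 ∧ q ≠ 0 := by
  constructor <;> rintro rfl <;> simp [colMat, Matrix.det_fin_two_of] at h

lemma mul_colMat_eq_colMat_mul_diagM_iff (N : M2) (p q : E2) (a b : ℝ) :
    N * colMat p q = colMat p q * diagM a b ↔ mact N p = a • p ∧ mact N q = b • q := by
  rw [mul_colMat, colMat_mul_diagM, colMat_inj]

lemma mnorm_colMat_le (p q : E2) : mnorm (colMat p q) ≤ ‖p‖ + ‖q‖ := by
  refine ContinuousLinearMap.opNorm_le_bound _ (by positivity) fun t => ?_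
  have ht : mCLM (colMat p q) t = t 0 • p + t 1 • q := by
    ext k; change mact _ t k = _; fin_cases k <;> simp [mact_apply, colMat, mul_comm]
  have h0 : |t 0| ≤ ‖t‖ := PiLp.norm_apply_le t 0
  have h1 : |t 1| ≤ ‖t‖ := PiLp.norm_apply_le t 1
  calc ‖mCLM (colMat p q) t‖ ≤ |t 0| * ‖p‖ + |t 1| * ‖q‖ := by
        rw [ht]; refine (norm_add_le _ _).trans ?_; simp [norm_smul]
    _ ≤ (‖p‖ + ‖q‖) * ‖t‖ := by nlinarith [norm_nonneg p, norm_nonneg q]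

lemma norm_le_mul_norm_mact {A : M2} {C : ℝ} (hA : IsUnit A.det) (hAC : mnorm A⁻¹ ≤ C) (x : E2) :
    ‖x‖ ≤ C * ‖mact A x‖ := by
  calc ‖x‖ = ‖mact A⁻¹ (mact A x)‖ := by rw [← mact_mul, Matrix.nonsing_inv_mul A hA, mact_one]
    _ ≤ mnorm A⁻¹ * ‖mact A x‖ := norm_mact_le _ _
    _ ≤ C * ‖mact A x‖ := by gcongr

lemma norm_mact_pos {A : M2} {C : ℝ} (hA : IsUnit A.det) (hAC : mnorm A⁻¹ ≤ C) {x : E2}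
    (hx : x ≠ 0) : 0 < ‖mact A x‖ := by
  refine norm_pos_iff.mpr fun h => hx ?_
  simpa [h] using norm_le_mul_norm_mact hA hAC x

lemma exists_norm_sub_smul_le_abs_det {u z : E2} (hu : ‖u‖ = 1) (hz : ‖z‖ = 1) :
    ∃ σ : ℝ, |σ| = 1 ∧ ‖u - σ • z‖ ≤ 2 * |(colMat u z).det| := by
  have hu2 := norm_sq_eq u
  have hz2 := norm_sq_eq z
  rw [hu] at hu2
  rw [hz] at hz2
  set c := u 0 * z 0 + u 1 * z 1
  obtain ⟨σ, hσ, hσc⟩ : ∃ σ : ℝ, |σ| = 1 ∧ σ * c = |c| := by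
    rcases le_total 0 c with h | h
    · exact ⟨1, by simp, by simp [abs_of_nonneg h]⟩
    · exact ⟨-1, by simp, by simp [abs_of_nonpos h]⟩
  have hσ2 : σ ^ 2 = 1 := by rw [← sq_abs, hσ, one_pow]
  -- Lagrange's identity for unit vectors
  have hlag : |c| ^ 2 + (colMat u z).det ^ 2 = 1 := by
    rw [sq_abs]; simp only [colMat, Matrix.det_fin_two_of, c]; nlinarith
  have hsub : ‖u - σ • z‖ ^ 2 = 2 - 2 * |c| := by
    rw [norm_sq_eq, ← hσc]
    simp only [PiLp.sub_apply, PiLp.smul_apply, smul_eq_mul, c]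
    linear_combination -hu2 - σ ^ 2 * hz2 + hσ2
  refine ⟨σ, hσ, (sq_le_sq₀ (norm_nonneg _) (by positivity)).mp ?_⟩
  rw [hsub, mul_pow, sq_abs]
  nlinarith [abs_nonneg c]

lemma log_norm_mact_sub_le {A : M2} {C : ℝ} (hA : IsUnit A.det) (hAC : mnorm A ≤ C)
    (hAC' : mnorm A⁻¹ ≤ C) {u z : E2} (hu : ‖u‖ = 1) (hz : ‖z‖ = 1) :
    Real.log ‖mact A u‖ - Real.log ‖mact A z‖ ≤ 2 * C ^ 2 * |(colMat u z).det| := by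
  set t := |(colMat u z).det|
  obtain ⟨σ, hσ, hσt⟩ := exists_norm_sub_smul_le_abs_det hu hz
  have hC : 0 ≤ C := (mnorm_nonneg A).trans hAC
  have hAz : 1 ≤ C * ‖mact A z‖ := hz ▸ norm_le_mul_norm_mact hA hAC' z
  have hAu_le : ‖mact A u‖ ≤ ‖mact A z‖ * (1 + 2 * C ^ 2 * t) :=
    calc ‖mact A u‖ = ‖σ • mact A z + mact A (u - σ • z)‖ := by
          rw [mact_sub, mact_smul, add_sub_cancel]
      _ ≤ ‖mact A z‖ + C * (2 * t) := by
          refine (norm_add_le _ _).trans (add_le_add ?_ ?_)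
          · rw [norm_smul, Real.norm_eq_abs, hσ, one_mul]
          · exact (norm_mact_le _ _).trans (mul_le_mul hAC hσt (norm_nonneg _) hC)
      _ ≤ ‖mact A z‖ * (1 + 2 * C ^ 2 * t) := by
          nlinarith [mul_le_mul_of_nonneg_left hAz (by positivity : 0 ≤ 2 * C * t)]
  have hAz_pos : 0 < ‖mact A z‖ := norm_mact_pos hA hAC' (norm_ne_zero_iff.mp (hz ▸ one_ne_zero))
  have hAu_pos : 0 < ‖mact A u‖ := norm_mact_pos hA hAC' (norm_ne_zero_iff.mp (hu ▸ one_ne_zero))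
  have ht : 0 < 1 + 2 * C ^ 2 * t := by positivity
  calc Real.log ‖mact A u‖ - Real.log ‖mact A z‖
      ≤ Real.log (‖mact A z‖ * (1 + 2 * C ^ 2 * t)) - Real.log ‖mact A z‖ := by
        gcongr
    _ = Real.log (1 + 2 * C ^ 2 * t) := by rw [Real.log_mul hAz_pos.ne' ht.ne']; ring
    _ ≤ 2 * C ^ 2 * t := by linarith [Real.log_le_sub_one_of_pos ht]

noncomputable def sinAngle (x y : E2) : ℝ := |(colMat x y).det| / (‖x‖ * ‖y‖)

lemma log_norm_mact_sub_le_add_sinAngle {A : M2} {C : ℝ} (hA : IsUnit A.det)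
    (hAC : mnorm A ≤ C) (hAC' : mnorm A⁻¹ ≤ C) {x y : E2} (hx : x ≠ 0) (hy : y ≠ 0) :
    Real.log ‖mact A x‖ - Real.log ‖mact A y‖ ≤
      Real.log ‖x‖ - Real.log ‖y‖ + 2 * C ^ 2 * sinAngle x y := by
  have hx' : 0 < ‖x‖ := norm_pos_iff.mpr hx
  have hy' : 0 < ‖y‖ := norm_pos_iff.mpr hy
  have hAx := norm_mact_pos hA hAC' hx
  have hAy := norm_mact_pos hA hAC' hy
  have key := log_norm_mact_sub_le hA hAC hAC' (u := ‖x‖⁻¹ • x) (z := ‖y‖⁻¹ • y)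
    (by rw [norm_smul, norm_inv, norm_norm, inv_mul_cancel₀ hx'.ne'])
    (by rw [norm_smul, norm_inv, norm_norm, inv_mul_cancel₀ hy'.ne'])
  rw [mact_smul, mact_smul, norm_smul, norm_smul, norm_inv, norm_inv, norm_norm, norm_norm,
    Real.log_mul (by positivity) hAx.ne', Real.log_mul (by positivity) hAy.ne', Real.log_inv,
    Real.log_inv, det_colMat_smul, abs_mul, abs_mul, abs_inv, abs_inv, abs_norm, abs_norm] at key
  rw [sinAngle, ← inv_mul_eq_div, mul_inv]
  linarith

lemma exists_eigenvectors_of_eq_conj_diagM {M S : M2} {μ₁ μ₂ : ℝ} (hS : IsUnit S)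
    (hM : M = S * diagM μ₁ μ₂ * S⁻¹) :
    ∃ v w : E2, (colMat v w).det ≠ 0 ∧ mact M v = μ₁ • v ∧ mact M w = μ₂ • w := by
  obtain ⟨v, w, rfl⟩ := exists_colMat_eq S
  have hdet := (Matrix.isUnit_iff_isUnit_det _).mp hS
  refine ⟨v, w, hdet.ne_zero, (mul_colMat_eq_colMat_mul_diagM_iff _ _ _ _ _).mp ?_⟩
  rw [hM, mul_assoc, Matrix.nonsing_inv_mul _ hdet, mul_one]

lemma mact_conj_eq_smul {B N : M2} (hB : IsUnit B.det) {v : E2} {a : ℝ} (hv : mact N v = a • v) :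
    mact (B * N * B⁻¹) (mact B v) = a • mact B v := by
  rw [← mact_mul, mul_assoc, Matrix.nonsing_inv_mul _ hB, mul_one, mact_mul, hv, mact_smul]

lemma exists_det_eq_one_conj_eq_diagM {N : M2} {x y : E2} {a b ε : ℝ} (hx : mact N x = a • x)
    (hy : mact N y = b • y) (hε : 0 < ε) (hxy : ε ≤ sinAngle x y) :
    ∃ P : M2, P.det = 1 ∧ mnorm P ≤ ε⁻¹ + 1 ∧ P⁻¹ * N * P = diagM a b := by
  have hD : (colMat x y).det ≠ 0 := by
    intro hD
    simp only [sinAngle, hD, abs_zero, zero_div] at hxy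
    linarith
  obtain ⟨hx0, hy0⟩ := ne_zero_of_det_colMat_ne_zero hD
  have hxn := norm_pos_iff.mpr hx0
  have hyn := norm_pos_iff.mpr hy0
  set P := colMat ((‖y‖ / (colMat x y).det) • x) (‖y‖⁻¹ • y)
  have hP : P.det = 1 := by
    rw [det_colMat_smul]; field_simp
  refine ⟨P, hP, ?_, ?_⟩
  · calc mnorm P ≤ ‖(‖y‖ / (colMat x y).det) • x‖ + ‖‖y‖⁻¹ • y‖ := mnorm_colMat_le _ _
      _ = (sinAngle x y)⁻¹ + 1 := by
        rw [norm_smul, norm_smul, sinAngle, norm_div, norm_inv, norm_norm, Real.norm_eq_abs]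
        field_simp
      _ ≤ ε⁻¹ + 1 := by gcongr
  · have hNP : N * P = P * diagM a b :=
      (mul_colMat_eq_colMat_mul_diagM_iff _ _ _ _ _).mpr
        ⟨by rw [mact_smul, hx, smul_comm], by rw [mact_smul, hy, smul_comm]⟩
    rw [mul_assoc, hNP, ← mul_assoc, Matrix.nonsing_inv_mul P (hP ▸ isUnit_one), one_mul]

lemma prodRange_succ (A : ℕ → M2) (i : ℕ) : prodRange A (i + 1) = A i * prodRange A i := by
  simp [prodRange, List.range_succ]

lemma isUnit_det_prodRange {A : ℕ → M2} {k : ℕ} (h : ∀ j < k, IsUnit (A j).det) :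
    IsUnit (prodRange A k).det := by
  induction k with
  | zero => simp [prodRange]
  | succ k ih =>
    rw [prodRange_succ, Matrix.det_mul]
    exact (h k k.lt_succ_self).mul (ih fun j hj => h j (hj.trans k.lt_succ_self))

lemma log_norm_prodRange_sub_le {A : ℕ → M2} {C δ : ℝ} {n : ℕ}
    (hA : ∀ i < n, IsUnit (A i).det ∧ mnorm (A i) ≤ C ∧ mnorm (A i)⁻¹ ≤ C)
    {v w : E2} (hvw : (colMat v w).det ≠ 0)
    (hδ : ∀ i < n, sinAngle (mact (prodRange A i) v) (mact (prodRange A i) w) ≤ δ) :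
    Real.log ‖mact (prodRange A n) v‖ - Real.log ‖mact (prodRange A n) w‖ ≤
      Real.log ‖v‖ - Real.log ‖w‖ + n * (2 * C ^ 2 * δ) := by
  induction n with
  | zero => simp [prodRange, mact_one]
  | succ k ih =>
    obtain ⟨hAk, hAkC, hAkC'⟩ := hA k k.lt_succ_self
    have hdet : (colMat (mact (prodRange A k) v) (mact (prodRange A k) w)).det ≠ 0 := by
      rw [det_colMat_mact]
      exact mul_ne_zero (isUnit_det_prodRange fun j hj => (hA j (by omega)).1).ne_zero hvw
    obtain ⟨hx, hy⟩ := ne_zero_of_det_colMat_ne_zero hdet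
    have hstep := log_norm_mact_sub_le_add_sinAngle hAk hAkC hAkC' hx hy
    have hk := mul_le_mul_of_nonneg_left (hδ k k.lt_succ_self) (by positivity : 0 ≤ 2 * C ^ 2)
    have ih' := ih (fun i hi => hA i (by omega)) (fun i hi => hδ i (by omega))
    rw [prodRange_succ, mact_mul, mact_mul]
    push_cast
    linarith

lemma exists_lt_sinAngle_of_lt_log_abs_sub {A : ℕ → M2} {C δ : ℝ} {n : ℕ}
    (hA : ∀ i < n, IsUnit (A i).det ∧ mnorm (A i) ≤ C ∧ mnorm (A i)⁻¹ ≤ C)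
    {v w : E2} (hvw : (colMat v w).det ≠ 0) {μ₁ μ₂ : ℝ}
    (hv : mact (prodRange A n) v = μ₁ • v) (hw : mact (prodRange A n) w = μ₂ • w)
    (hgap : n * (2 * C ^ 2 * δ) < Real.log |μ₁| - Real.log |μ₂|) :
    ∃ i < n, δ < sinAngle (mact (prodRange A i) v) (mact (prodRange A i) w) := by
  by_contra! hδ
  have hμ : μ₁ * μ₂ ≠ 0 := by
    have hdet := det_colMat_mact (prodRange A n) v w
    rw [hv, hw, det_colMat_smul] at hdet
    refine fun h => mul_ne_zero (isUnit_det_prodRange fun j hj => (hA j hj).1).ne_zero hvw ?_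
    rw [← hdet, h, zero_mul]
  obtain ⟨hv0, hw0⟩ := ne_zero_of_det_colMat_ne_zero hvw
  have hlog := log_norm_prodRange_sub_le hA hvw hδ
  rw [hv, hw, norm_smul, norm_smul, Real.norm_eq_abs, Real.norm_eq_abs,
    Real.log_mul (abs_ne_zero.mpr (left_ne_zero_of_mul hμ)) (norm_ne_zero_iff.mpr hv0),
    Real.log_mul (abs_ne_zero.mpr (right_ne_zero_of_mul hμ)) (norm_ne_zero_iff.mpr hw0)] at hlog
  linarith

/-- Along a periodic orbit of bounded diagonalizable cocycles whose two
Lyapunov exponents are separated by `χ < χ/2`, at some point of the orbit the return map is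
diagonalized by a change of basis of determinant one with norm bounded by a constant `α`
depending only on the bound `C` and on `χ`. -/
theorem stmt10 (C χ : ℝ) (hC : 1 < C) (hχ : χ < 0) :
    ∃ α > (0 : ℝ), ∀ n : ℕ, 1 ≤ n → ∀ A : ℕ → M2,
      (∀ i < n, IsUnit (A i) ∧ mnorm (A i) < C ∧ mnorm (Ring.inverse (A i)) < C) →
      ∀ (μ₁ μ₂ : ℝ) (S : M2), IsUnit S →
        prodRange A n = S * diagM μ₁ μ₂ * S⁻¹ →
        (1 / n : ℝ) * Real.log |μ₂| < χ →
        χ / 2 < (1 / n : ℝ) * Real.log |μ₁| →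
        ∃ i < n, ∃ P : M2, P.det = 1 ∧ mnorm P < α ∧
          ∃ d₁ d₂ : ℝ,
            P⁻¹ * (prodRange A i * prodRange A n * (prodRange A i)⁻¹) * P = diagM d₁ d₂ := by
  set ε := -χ / (8 * C ^ 2) with hε_def
  have hε : 0 < ε := div_pos (by linarith) (by positivity)
  refine ⟨ε⁻¹ + 2, by positivity, fun n hn A hA μ₁ μ₂ S hS hM hμ₂ hμ₁ => ?_⟩
  have hA' : ∀ i < n, IsUnit (A i).det ∧ mnorm (A i) ≤ C ∧ mnorm (A i)⁻¹ ≤ C := fun i hi => by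
    obtain ⟨hu, h, h'⟩ := hA i hi
    exact ⟨(A i).isUnit_iff_isUnit_det.mp hu, h.le, ((A i).nonsing_inv_eq_ringInverse ▸ h').le⟩
  obtain ⟨v, w, hvw, hv, hw⟩ := exists_eigenvectors_of_eq_conj_diagM hS hM
  have hgap : n * (2 * C ^ 2 * ε) < Real.log |μ₁| - Real.log |μ₂| := by
    have hn' : (0 : ℝ) < n := by exact_mod_cast hn
    have h2C : 2 * C ^ 2 * ε = -χ / 4 := by rw [hε_def]; field_simp; ring
    rw [one_div, inv_mul_lt_iff₀ hn'] at hμ₂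
    rw [one_div, lt_inv_mul_iff₀ hn'] at hμ₁
    rw [h2C]
    nlinarith
  obtain ⟨i, hi, hεi⟩ := exists_lt_sinAngle_of_lt_log_abs_sub hA' hvw hv hw hgap
  have hB := isUnit_det_prodRange fun j hj => (hA' j (hj.trans hi)).1
  obtain ⟨P, hP, hPnorm, hPdiag⟩ :=
    exists_det_eq_one_conj_eq_diagM (mact_conj_eq_smul hB hv) (mact_conj_eq_smul hB hw) hε hεi.le
  exact ⟨i, hi, P, hP, by linarith, μ₁, μ₂, hPdiag⟩
end

section
/- Let n ≥ 1 and let 𝒦 be a compact subset of GL(2,ℝ)ⁿ such that every tuple (A_i)_{i∈ℤ/nℤ} in 𝒦 is a contracting linear cocycle, i.e. the powers of the product A_{n−1}···A_0 tend to 0. Then there exists an integer k ≥ 1 such that for every (A_i) ∈ 𝒦 and every i ∈ ℤ/nℤ, ‖A_{i+k−1}···A_{i+1}·A_i‖ < 1/2, where indices are taken mod n. -/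
open Filter Topology

noncomputable section

/-- The product `A (n-1) * ⋯ * A 0` of a cocycle over `ℤ/nℤ`. -/
def cocProd (n : ℕ) (A : ZMod n → M2) : M2 :=
  (((List.range n).map fun i => A (i : ZMod n)).reverse).prod

/-- The partial product `A (i+j-1) * ⋯ * A i` (indices mod `n`). -/
def partProd (n : ℕ) (A : ZMod n → M2) (i : ZMod n) (j : ℕ) : M2 :=
  (((List.range j).map fun l => A (i + (l : ZMod n))).reverse).prod

/-- The map induced on `ℝ² × ℤ/nℤ` by a cocycle of maps. -/
def step (n : ℕ) (f : ZMod n → E2 → E2) (p : E2 × ZMod n) : E2 × ZMod n :=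
  (f p.2 p.1, p.2 + 1)

/-- A cocycle of maps is contracting if every orbit of the induced map converges to the
zero section. -/
def IsContractingCocycle (n : ℕ) (f : ZMod n → E2 → E2) : Prop :=
  ∀ p : E2 × ZMod n, Tendsto (fun m => ((step n f)^[m] p).1) atTop (𝓝 (0 : E2))

/-- `f` is a `C¹` diffeomorphism of `ℝ²`. -/
def IsC1Diffeo (f : E2 → E2) : Prop :=
  ContDiff ℝ 1 f ∧ Function.Bijective f ∧ ContDiff ℝ 1 (Function.invFun f)

/-- A diffeomorphism cocycle over `ℤ/nℤ`: a family of `C¹` diffeomorphisms of `ℝ²`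
fixing the origin. -/
def IsDiffeoCocycle (n : ℕ) (f : ZMod n → E2 → E2) : Prop :=
  ∀ i, IsC1Diffeo (f i) ∧ f i 0 = 0

/-- `f (i+j-1) ∘ ⋯ ∘ f i`, the composition of `j` consecutive maps of the cocycle. -/
def compUpTo (n : ℕ) (f : ZMod n → E2 → E2) (i : ZMod n) : ℕ → E2 → E2
  | 0 => id
  | j + 1 => f (i + (j : ZMod n)) ∘ compUpTo n f i j

end

/-! The product of the `n` matrices starting at index `i` is conjugate, by the product of the
first `i` matrices, to the period product `A (n-1) ⋯ A 0`, so its powers tend to `0` as well.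
By submultiplicativity, `‖B ^ p‖ < 1/2` implies `‖B ^ q‖ < 1/2` for every nonzero multiple
`q` of `p`; hence the open sets `U M = {A | ∀ i, ‖(A (i+n-1) ⋯ A i) ^ M!‖ < 1/2}` increase
with `M` and cover `𝒦`. By compactness one of them contains `𝒦`, and `k = n * M!` works. -/

open scoped Nat

lemma norm_pow_le_norm_of_norm_le_one {R : Type*} [SeminormedRing R] {b : R} (hb : ‖b‖ ≤ 1)
    {t : ℕ} (ht : t ≠ 0) : ‖b ^ t‖ ≤ ‖b‖ :=
  (norm_pow_le' b (Nat.pos_of_ne_zero ht)).trans (pow_le_of_le_one (norm_nonneg b) hb ht)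

lemma norm_pow_lt_of_dvd {R : Type*} [SeminormedRing R] {b : R} {p q : ℕ} {ε : ℝ}
    (hb : ‖b ^ p‖ < ε) (hε : ε ≤ 1) (hpq : p ∣ q) (hq : q ≠ 0) : ‖b ^ q‖ < ε := by
  obtain ⟨t, rfl⟩ := hpq
  rw [pow_mul]
  exact (norm_pow_le_norm_of_norm_le_one (hb.le.trans hε) (right_ne_zero_of_mul hq)).trans_lt hb

lemma tendsto_pow_nhds_zero_of_semiconjBy {R : Type*} [Semiring R] [TopologicalSpace R]
    [ContinuousMul R] {u : Rˣ} {x y : R} (h : SemiconjBy (u : R) x y)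
    (hx : Tendsto (x ^ ·) atTop (𝓝 0)) : Tendsto (y ^ ·) atTop (𝓝 0) := by
  have hy : ∀ m : ℕ, y ^ m = u * x ^ m * ↑u⁻¹ := fun m => by
    rw [(h.pow_right m).eq, Units.mul_inv_cancel_right]
  simpa [hy] using (hx.const_mul (u : R)).mul_const (↑u⁻¹ : R)

lemma mCLM_pow (A : M2) (p : ℕ) : mCLM (A ^ p) = mCLM A ^ p := map_pow _ _ _

lemma continuous_mnorm : Continuous mnorm :=
  (Matrix.toEuclideanCLM (𝕜 := ℝ) (n := Fin 2)).toAlgEquiv.toLinearMap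
    |>.continuous_of_finiteDimensional.norm

lemma mnorm_zero : mnorm 0 = 0 := by simp [mnorm, mCLM]

lemma mnorm_pow_lt_of_dvd {B : M2} {p q : ℕ} {ε : ℝ} (hB : mnorm (B ^ p) < ε) (hε : ε ≤ 1)
    (hpq : p ∣ q) (hq : q ≠ 0) : mnorm (B ^ q) < ε := by
  rw [mnorm, mCLM_pow] at hB ⊢
  exact norm_pow_lt_of_dvd hB hε hpq hq

section PartialProducts

variable (n : ℕ) (A : ZMod n → M2)

lemma partProd_zero (i : ZMod n) : partProd n A i 0 = 1 := rfl

lemma partProd_succ (i : ZMod n) (j : ℕ) :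
    partProd n A i (j + 1) = A (i + j) * partProd n A i j := by
  simp [partProd, List.range_succ]

lemma partProd_add (i : ZMod n) (a b : ℕ) :
    partProd n A i (a + b) = partProd n A (i + a) b * partProd n A i a := by
  induction b with
  | zero => simp [partProd_zero]
  | succ b ih =>
    rw [← add_assoc, partProd_succ, ih, partProd_succ, mul_assoc, Nat.cast_add, add_assoc]

lemma partProd_mul_period (i : ZMod n) (m : ℕ) :
    partProd n A i (n * m) = partProd n A i n ^ m := by
  induction m with
  | zero => rfl
  | succ m ih => rw [Nat.mul_succ, partProd_add, ih, Nat.cast_mul, ZMod.natCast_self, zero_mul,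
      add_zero, pow_succ']

lemma cocProd_eq_partProd : cocProd n A = partProd n A 0 n := by
  simp [cocProd, partProd]

lemma isUnit_partProd (hA : ∀ i, IsUnit (A i)) (i : ZMod n) (j : ℕ) :
    IsUnit (partProd n A i j) := by
  induction j with
  | zero => exact isUnit_one
  | succ j ih => rw [partProd_succ]; exact (hA _).mul ih

lemma semiconjBy_partProd_period [NeZero n] (i : ZMod n) :
    SemiconjBy (partProd n A 0 i.val) (cocProd n A) (partProd n A i n) := by
  have h₁ := partProd_add n A 0 i.val n
  have h₂ := partProd_add n A 0 n i.val
  rw [zero_add, ZMod.natCast_zmod_val] at h₁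
  rw [zero_add, ZMod.natCast_self, add_comm, h₁] at h₂
  rw [SemiconjBy, cocProd_eq_partProd, ← h₂]

lemma continuous_partProd (i : ZMod n) (j : ℕ) :
    Continuous fun A : ZMod n → M2 => partProd n A i j := by
  induction j with
  | zero => exact continuous_const
  | succ j ih => simp only [partProd_succ]; exact (continuous_apply _).mul ih

end PartialProducts

lemma exists_forall_mnorm_partProd_pow_factorial_lt {n : ℕ} [NeZero n] {A : ZMod n → M2}
    (hA : ∀ i, IsUnit (A i)) (hT : Tendsto (cocProd n A ^ ·) atTop (𝓝 0))
    {ε : ℝ} (hε : 0 < ε) :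
    ∃ M, ∀ i, mnorm (partProd n A i n ^ M !) < ε := by
  have hi : ∀ i, ∀ᶠ m in atTop, mnorm (partProd n A i n ^ m) < ε := fun i =>
    have hu := (isUnit_partProd n A hA 0 i.val).unit_spec
    have := tendsto_pow_nhds_zero_of_semiconjBy (hu ▸ semiconjBy_partProd_period n A i) hT
    ((continuous_mnorm.tendsto' 0 0 mnorm_zero).comp this).eventually_lt_const hε
  exact (factorial_tendsto_atTop.eventually (eventually_all.mpr hi)).exists

/-- On a compact set of contracting linear cocycles of period `n`, some
uniform number `k` of consecutive steps contracts by a factor `1/2` from every starting index. -/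
theorem stmt15 (n : ℕ) (hn : 1 ≤ n) (𝒦 : Set (ZMod n → M2)) (hcpt : IsCompact 𝒦)
    (hcon : ∀ A ∈ 𝒦, (∀ i, IsUnit (A i)) ∧
      Filter.Tendsto (fun m : ℕ => cocProd n A ^ m) Filter.atTop (nhds (0 : M2))) :
    ∃ k : ℕ, 1 ≤ k ∧ ∀ A ∈ 𝒦, ∀ i : ZMod n, mnorm (partProd n A i k) < 1 / 2 := by
  have : NeZero n := ⟨by omega⟩
  let U M : Set (ZMod n → M2) := {A | ∀ i, mnorm (partProd n A i n ^ M !) < 1 / 2}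
  have hU_open M : IsOpen (U M) := by
    simp only [U, Set.ofPred_forall]
    exact isOpen_iInter_of_finite fun i =>
      isOpen_lt (continuous_mnorm.comp ((continuous_partProd n i n).pow _)) continuous_const
  have hU_mono : Monotone U := fun M M' hM A hA i =>
    mnorm_pow_lt_of_dvd (hA i) (by norm_num) (Nat.factorial_dvd_factorial hM)
      (Nat.factorial_ne_zero _)
  have hU_cover : 𝒦 ⊆ ⋃ M, U M := fun A hA => Set.mem_iUnion.mpr
    (exists_forall_mnorm_partProd_pow_factorial_lt (hcon A hA).1 (hcon A hA).2 one_half_pos)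
  obtain ⟨M, hM⟩ := hcpt.elim_directed_cover U hU_open hU_cover hU_mono.directed_le
  refine ⟨n * M !, Nat.one_le_iff_ne_zero.mpr (by positivity), fun A hA i => ?_⟩
  rw [partProd_mul_period]
  exact hM hA i
end
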